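/- The dynamic-programming recurrence W(l, ξ, r, i) = min over l' ∈ {1..l−1}, r' ∈ {1..i−r} of max( W(l', ξ−1, r', i−r), comm(l', r', r), stage(l'+1..l, r) ) computes the minimum over all interval partitions of layers 1..l into ξ stages with prescribed replica counts of the maximum stage/channel cost. -/

import Mathlib

/-- Cost of an interval partition of layers `1..(c ξ)` into `ξ` stages with cut points
`c` (stage `j` consists of layers `c (j-1) + 1 .. c j`) and replica counts `rep`:
the maximum over per-stage costs and over adjacent inter-stage communication costs
(costs are assumed nonnegative, so folding `max` with base `0` yields the maximum). -/
noncomputable def partitionCost (stage : ℕ → ℕ → ℕ → ℝ) (comm : ℕ → ℕ → ℕ → ℝ)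
    (ξ : ℕ) (c : ℕ → ℕ) (rep : ℕ → ℕ) : ℝ :=
  max ((Finset.Icc 1 ξ).fold max 0 (fun j => stage (c (j - 1) + 1) (c j) (rep j)))
      ((Finset.Icc 1 (ξ - 1)).fold max 0 (fun j => comm (c j) (rep j) (rep (j + 1))))

lemma Icc_one_succ (n : ℕ) : Finset.Icc 1 (n+1) = insert (n+1) (Finset.Icc 1 n) :=
  (Finset.insert_Icc_right_eq_Icc_add_one (by omega)).symm

lemma fold_Icc_succ (n : ℕ) (f : ℕ → ℝ) :
    (Finset.Icc 1 (n+1)).fold max 0 f = max (f (n+1)) ((Finset.Icc 1 n).fold max 0 f) := by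
  rw [Icc_one_succ, Finset.fold_insert (by simp)]

lemma fold_max_nonneg (s : Finset ℕ) (f : ℕ → ℝ) : (0:ℝ) ≤ s.fold max 0 f :=
  ((Finset.fold_max_le _).mp le_rfl).1

/-- splitting off the last stage of a partition cost -/
lemma partitionCost_succ (stage comm : ℕ → ℕ → ℕ → ℝ) (n : ℕ) (c rep : ℕ → ℕ) :
    partitionCost stage comm (n+2) c rep =
      max (partitionCost stage comm (n+1) c rep)
        (max (comm (c (n+1)) (rep (n+1)) (rep (n+2)))
             (stage (c (n+1) + 1) (c (n+2)) (rep (n+2)))) := by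
  unfold partitionCost
  rw [show n + 2 - 1 = n + 1 from rfl, show n + 1 - 1 = n from rfl]
  rw [fold_Icc_succ (n+1) (fun j => stage (c (j - 1) + 1) (c j) (rep j)),
      fold_Icc_succ n (fun j => comm (c j) (rep j) (rep (j + 1)))]
  simp only [Nat.add_sub_cancel]
  generalize (Finset.Icc 1 (n+1)).fold max (0:ℝ)
    (fun j => stage (c (j - 1) + 1) (c j) (rep j)) = A
  generalize (Finset.Icc 1 n).fold max (0:ℝ)
    (fun j => comm (c j) (rep j) (rep (j + 1))) = B
  generalize stage (c (n+1) + 1) (c (n+2)) (rep (n+2)) = S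
  generalize comm (c (n+1)) (rep (n+1)) (rep (n+2)) = C
  rw [max_comm S A, max_comm C B, max_max_max_comm A S B C, max_comm S C]

/-- the partition cost only depends on the relevant values of `c` and `rep` -/
lemma partitionCost_congr (stage comm : ℕ → ℕ → ℕ → ℝ) (n : ℕ) (c c' rep rep' : ℕ → ℕ)
    (hc : ∀ j ≤ n, c j = c' j) (hrep : ∀ j, 1 ≤ j → j ≤ n → rep j = rep' j) :
    partitionCost stage comm n c rep = partitionCost stage comm n c' rep' := by
  unfold partitionCost
  congr 1
  · apply Finset.fold_congr
    intro j hj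
    simp only [Finset.mem_Icc] at hj
    rw [hc (j-1) (by omega), hc j (by omega), hrep j (by omega) (by omega)]
  · apply Finset.fold_congr
    intro j hj
    simp only [Finset.mem_Icc] at hj
    rw [hc j (by omega), hrep j (by omega) (by omega), hrep (j+1) (by omega) (by omega)]

lemma cut_ge (c : ℕ → ℕ) (ξ : ℕ) (h0 : c 0 = 0) (hlt : ∀ j < ξ, c j < c (j+1)) :
    ∀ j ≤ ξ, j ≤ c j := by
  intro j
  induction j with
  | zero => omega
  | succ k ih => intro h; have := hlt k (by omega); have := ih (by omega); omega

lemma sum_rep_ge (rep : ℕ → ℕ) (n : ℕ) (h : ∀ j, 1 ≤ j → j ≤ n → 1 ≤ rep j) :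
    n ≤ ∑ j ∈ Finset.Icc 1 n, rep j := by
  calc n = ∑ _j ∈ Finset.Icc 1 n, 1 := by simp
    _ ≤ ∑ j ∈ Finset.Icc 1 n, rep j := by
        apply Finset.sum_le_sum
        intro j hj
        simp only [Finset.mem_Icc] at hj
        exact h j hj.1 hj.2

/-- Bellman optimality of the PRM dynamic program. If `W` satisfies the
base case `W l 1 i i = stage 1 l i` and the recurrence
`W l ξ r i = min_{l', r'} max(W l' (ξ−1) r' (i−r), comm l' r' r, stage (l'+1) l r)`
(the min taken over feasible sub-tuples, expressed as `IsLeast` of the candidate set),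
then `W l ξ r i` is the minimum cost over all interval partitions of layers `1..l` into
`ξ` stages whose replica counts (each ≥ 1) sum to `i` and whose last stage has `r`
replicas. -/
theorem prm_dp_optimal (stage comm : ℕ → ℕ → ℕ → ℝ)
    (hstage : ∀ a b r, 0 ≤ stage a b r) (hcomm : ∀ l' r' r, 0 ≤ comm l' r' r)
    (W : ℕ → ℕ → ℕ → ℕ → ℝ)
    (hbase : ∀ l i, 1 ≤ l → 1 ≤ i → W l 1 i i = stage 1 l i)
    (hrec : ∀ l ξ r i, 2 ≤ ξ → ξ ≤ l → 1 ≤ r → r + (ξ - 1) ≤ i →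
      IsLeast {x : ℝ | ∃ l' r', ξ - 1 ≤ l' ∧ l' ≤ l - 1 ∧ 1 ≤ r' ∧
          r' + (ξ - 2) ≤ i - r ∧ (ξ = 2 → r' = i - r) ∧
          x = max (W l' (ξ - 1) r' (i - r))
                (max (comm l' r' r) (stage (l' + 1) l r))}
        (W l ξ r i)) :
    ∀ l ξ r i, 1 ≤ ξ → ξ ≤ l → 1 ≤ r → r + (ξ - 1) ≤ i → (ξ = 1 → r = i) →
      IsLeast {x : ℝ | ∃ (c : ℕ → ℕ) (rep : ℕ → ℕ),
          c 0 = 0 ∧ c ξ = l ∧ (∀ j < ξ, c j < c (j + 1)) ∧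
          (∀ j, 1 ≤ j → j ≤ ξ → 1 ≤ rep j) ∧
          (∑ j ∈ Finset.Icc 1 ξ, rep j) = i ∧ rep ξ = r ∧
          x = partitionCost stage comm ξ c rep}
        (W l ξ r i) := by
  intro l ξ
  induction ξ generalizing l with
  | zero => intro r i h; omega
  | succ n ih =>
    intro r i hξ hξl hr hri hξ1
    match n, ih with
    | 0, _ =>
      -- base case ξ = 1
      have hrl : r = i := hξ1 rfl
      subst hrl
      have hl1 : 1 ≤ l := hξl
      have hWeq : W l 1 r r = stage 1 l r := hbase l r hl1 hr
      have hcost : ∀ c rep : ℕ → ℕ, c 0 = 0 → c 1 = l → rep 1 = r →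
          partitionCost stage comm 1 c rep = stage 1 l r := by
        intro c rep h0 h1 hrep
        unfold partitionCost
        rw [show (1:ℕ) - 1 = 0 from rfl]
        rw [show Finset.Icc 1 0 = (∅ : Finset ℕ) by simp,
            show Finset.Icc 1 1 = {1} by simp]
        simp [h0, h1, hrep, max_eq_left (hstage 1 l r)]
      constructor
      · refine ⟨fun j => if j = 0 then 0 else l, fun _ => r, by simp, by simp, ?_, ?_, ?_, rfl, ?_⟩
        · intro j hj
          interval_cases j
          simpa using (show 0 < l by omega)
        · intro j _ _; exact hr
        · simp
        · rw [hcost _ _ (by simp) (by simp) rfl, hWeq]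
      · rintro x ⟨c, rep, h0, h1, _, _, _, hlast, hx⟩
        rw [hx, hcost c rep h0 h1 hlast, hWeq]
    | (m+1), ih =>
      -- inductive case ξ = m + 2
      have e2 : m + 1 + 1 = m + 2 := rfl
      rw [e2] at hξl ⊢
      have hR := hrec l (m+2) r i (by omega) hξl hr (by omega)
      simp only [show m + 2 - 1 = m + 1 from rfl, show m + 2 - 2 = m from rfl] at hR
      constructor
      · -- membership: W l (m+2) r i is a partition cost
        obtain ⟨l', r', hl'1, hl'2, hr'1, hr'2, hr'3, hx⟩ := hR.1
        have hIH := ih l' r' (i - r) (by omega) hl'1 hr'1 (by omega)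
          (by intro h; exact hr'3 (by omega))
        obtain ⟨c', rep', hc0, hcl, hclt, hrep1, hsum, hlast, hcost⟩ := hIH.1
        refine ⟨fun j => if j = m+2 then l else c' j, fun j => if j = m+2 then r else rep' j,
          ?_, ?_, ?_, ?_, ?_, ?_, ?_⟩
        · simp [hc0]
        · simp
        · intro j hj
          rcases Nat.lt_or_ge j (m+1) with h | h
          · simp only [if_neg (by omega : j ≠ m+2), if_neg (by omega : j+1 ≠ m+2)]
            exact hclt j h
          · have hj' : j = m+1 := by omega
            subst hj'
            show (if m+1 = m+2 then l else c' (m+1)) < (if m+1+1 = m+2 then l else c' (m+1+1))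
            rw [if_neg (by omega : ¬(m+1 = m+2)), if_pos rfl]
            omega
        · intro j hj1 hj2
          by_cases h : j = m+2
          · simp [h, hr]
          · simp only [if_neg h]; exact hrep1 j hj1 (by omega)
        · have hIcc : Finset.Icc 1 (m+2) = insert (m+2) (Finset.Icc 1 (m+1)) :=
            Icc_one_succ (m+1)
          rw [hIcc, Finset.sum_insert (by simp)]
          have : ∑ j ∈ Finset.Icc 1 (m+1), (if j = m+2 then r else rep' j) =
              ∑ j ∈ Finset.Icc 1 (m+1), rep' j := by
            apply Finset.sum_congr rfl
            intro j hj
            simp only [Finset.mem_Icc] at hj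
            rw [if_neg (by omega)]
          rw [this, if_pos rfl, hsum]
          omega
        · simp
        · rw [partitionCost_succ]
          have hsub : partitionCost stage comm (m+1)
              (fun j => if j = m+2 then l else c' j) (fun j => if j = m+2 then r else rep' j)
              = partitionCost stage comm (m+1) c' rep' := by
            apply partitionCost_congr
            · intro j hj; rw [if_neg (by omega)]
            · intro j hj1 hj2; rw [if_neg (by omega)]
          rw [hsub, ← hcost, hx]
          simp [show m+1 ≠ m+2 from by omega, hcl, hlast]
      · -- lower bound
        rintro x ⟨c, rep, h0, hl, hlt, hrep1, hsum, hlast, hx⟩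
        set l' := c (m+1) with hl'def
        set r' := rep (m+1) with hr'def
        have hge : ∀ j ≤ m+2, j ≤ c j := cut_ge c (m+2) h0 hlt
        have hl'1 : m+1 ≤ l' := hge (m+1) (by omega)
        have hl'2 : l' ≤ l - 1 := by
          have h1 := hlt (m+1) (by omega)
          rw [show m+1+1 = m+2 from rfl] at h1
          omega
        have hr'1 : 1 ≤ r' := hrep1 (m+1) (by omega) (by omega)
        have hsum' : (∑ j ∈ Finset.Icc 1 (m+1), rep j) = i - r := by
          have hIcc : Finset.Icc 1 (m+2) = insert (m+2) (Finset.Icc 1 (m+1)) :=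
            Icc_one_succ (m+1)
          rw [hIcc, Finset.sum_insert (by simp)] at hsum
          have : rep (m+2) = r := hlast
          omega
        have hr'2 : r' + m ≤ i - r := by
          have h1 : (∑ j ∈ Finset.Icc 1 (m+1), rep j) = r' + ∑ j ∈ Finset.Icc 1 m, rep j := by
            rw [Icc_one_succ m, Finset.sum_insert (by simp)]
          have h2 : m ≤ ∑ j ∈ Finset.Icc 1 m, rep j :=
            sum_rep_ge rep m (fun j hj1 hj2 => hrep1 j hj1 (by omega))
          omega
        have hr'3 : m + 2 = 2 → r' = i - r := by
          intro h
          have hm : m = 0 := by omega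
          subst hm
          simpa using hsum'
        have hsubmem := ih l' r' (i - r) (by omega) hl'1 hr'1 (by omega)
          (by intro h; exact hr'3 (by omega))
        have hWsub : W l' (m+1) r' (i - r) ≤ partitionCost stage comm (m+1) c rep := by
          apply hsubmem.2
          exact ⟨c, rep, h0, rfl, fun j hj => hlt j (by omega),
            fun j hj1 hj2 => hrep1 j hj1 (by omega), hsum', rfl, rfl⟩
        have hle := hR.2 ⟨l', r', hl'1, hl'2, hr'1, hr'2, hr'3, rfl⟩
        refine le_trans hle ?_
        rw [hx, partitionCost_succ, hl, hlast]
        exact max_le_max hWsub le_rfl
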